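/- Let G be a finite connected simple graph with e ≥ 1 edges and let ρ be a rotation system for G. Then the map-automorphism group Γ_ρ(G) acts freely on the set of 2e darts of G (ordered pairs (u,w) of adjacent vertices), so the order of Γ_ρ(G) divides 2e; moreover, if |Γ_ρ(G)| = 2e, then Γ_ρ(G) acts transitively on the darts, and hence transitively on the vertices and on the edges of G. -/

import Mathlib

/-- A rotation system for a simple graph `G`. -/
def IsRotationSystem {V : Type*} (G : SimpleGraph V) (ρ : V → Equiv.Perm V) : Prop :=
  ∀ v : V, (ρ v).IsCycleOn (G.neighborSet v) ∧ ∀ w : V, w ∉ G.neighborSet v → ρ v w = w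

/-- The action of a permutation `γ` on rotation systems: `(γ·ρ)_{γ(v)} = γ ∘ ρ_v ∘ γ⁻¹`. -/
def rotAct {V : Type*} (γ : Equiv.Perm V) (ρ : V → Equiv.Perm V) : V → Equiv.Perm V :=
  fun w => γ * ρ (γ⁻¹ w) * γ⁻¹

/-- The automorphism group `Γ(G)` of a simple graph, as a set of permutations. -/
def autSet {V : Type*} (G : SimpleGraph V) : Set (Equiv.Perm V) :=
  {γ | ∀ u w : V, G.Adj (γ u) (γ w) ↔ G.Adj u w}

/-! A map automorphism fixing a vertex `v` commutes with the rotation `ρ_v`, and `ρ_v` permutes the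
neighbours of `v` transitively; so if it also fixes one neighbour of `v` it fixes all of them.
Spreading this along the connected graph, a map automorphism fixing one dart is the identity.
Hence `Γ_ρ(G)` acts freely on the `2e` darts, every orbit has `|Γ_ρ(G)|` elements, and when
`|Γ_ρ(G)| = 2e` there is a single orbit. -/

open Equiv MulAction

namespace SimpleGraph

variable {V : Type*} {G : SimpleGraph V}

lemma Preconnected.forall_of_adj_closed (hG : G.Preconnected) {P : V → Prop}
    (hstep : ∀ a b, G.Adj a b → P a → P b) {u : V} (hu : P u) (v : V) : P v := by
  obtain ⟨p⟩ := hG u v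
  induction p with
  | nil => exact hu
  | cons hadj _ ih => exact ih (hstep _ _ hadj hu)

instance [Finite V] : Finite G.Dart :=
  Finite.of_injective _ Dart.toProd_injective

lemma natCard_dart [Finite V] (G : SimpleGraph V) : Nat.card G.Dart = 2 * G.edgeSet.ncard := by
  classical
  have := Fintype.ofFinite V
  rw [Nat.card_eq_fintype_card, dart_card_eq_twice_card_edges, ← Set.ncard_coe_finset,
    coe_edgeFinset]

end SimpleGraph

namespace MulAction

variable {Γ X : Type*} [Group Γ] [MulAction Γ X]

lemma natCard_eq_card_quotient_mul_of_stabilizer_eq_bot (h : ∀ x : X, stabilizer Γ x = ⊥) :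
    Nat.card X = Nat.card (orbitRel.Quotient Γ X) * Nat.card Γ := by
  rw [Nat.card_congr (selfEquivOrbitsQuotientProd h), Nat.card_prod]

lemma natCard_dvd_of_stabilizer_eq_bot (h : ∀ x : X, stabilizer Γ x = ⊥) :
    Nat.card Γ ∣ Nat.card X :=
  ⟨_, (natCard_eq_card_quotient_mul_of_stabilizer_eq_bot h).trans (mul_comm _ _)⟩

lemma isPretransitive_of_stabilizer_eq_bot_of_natCard_eq [Finite X]
    (h : ∀ x : X, stabilizer Γ x = ⊥) (hcard : Nat.card Γ = Nat.card X) :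
    IsPretransitive Γ X := by
  rw [pretransitive_iff_subsingleton_quotient]
  cases isEmpty_or_nonempty X
  · infer_instance
  have hX : Nat.card X ≠ 0 := Nat.card_ne_zero.mpr ⟨‹_›, ‹_›⟩
  have hquot : Nat.card (orbitRel.Quotient Γ X) = 1 := by
    have := natCard_eq_card_quotient_mul_of_stabilizer_eq_bot h
    rw [hcard] at this
    exact (Nat.mul_eq_right hX).mp this.symm
  exact (Nat.card_eq_one_iff_unique.mp hquot).1

end MulAction

section MapAutomorphism

variable {V : Type*} {G : SimpleGraph V} {ρ : V → Perm V}

lemma rotAct_one : rotAct 1 ρ = ρ := by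
  funext w
  simp [rotAct]

lemma rotAct_mul (a b : Perm V) : rotAct (a * b) ρ = rotAct a (rotAct b ρ) := by
  funext w
  simp [rotAct, mul_assoc]

lemma commute_of_rotAct_eq_self {γ : Perm V} (hγ : rotAct γ ρ = ρ) {v : V} (hv : γ v = v) :
    Commute γ (ρ v) := by
  have hconj : γ * ρ v * γ⁻¹ = ρ v := by
    simpa [rotAct, Perm.inv_eq_iff_eq.mpr hv.symm] using congrFun hγ v
  exact mul_inv_eq_iff_eq_mul.mp hconj

lemma IsRotationSystem.apply_eq_of_fixes_adj (hρ : IsRotationSystem G ρ) {γ : Perm V}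
    (hγ : rotAct γ ρ = ρ) {v x y : V} (hv : γ v = v) (hx : γ x = x) (hvx : G.Adj v x)
    (hvy : G.Adj v y) : γ y = y := by
  obtain ⟨k, rfl⟩ := (hρ v).1.2 hvx hvy
  rw [← Perm.mul_apply, ((commute_of_rotAct_eq_self hγ hv).zpow_right k).eq, Perm.mul_apply, hx]

lemma IsRotationSystem.eq_one_of_fixes_adj (hρ : IsRotationSystem G ρ) (hG : G.Connected)
    {γ : Perm V} (hγ : rotAct γ ρ = ρ) {u w : V} (huw : G.Adj u w) (hu : γ u = u)
    (hw : γ w = w) : γ = 1 := by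
  have hfix : ∀ v, γ v = v ∧ ∀ y, G.Adj v y → γ y = y :=
    hG.preconnected.forall_of_adj_closed
      (fun a b hab ⟨ha, hNa⟩ =>
        ⟨hNa b hab, fun _ hby => hρ.apply_eq_of_fixes_adj hγ (hNa b hab) ha hab.symm hby⟩)
      ⟨hu, fun _ huy => hρ.apply_eq_of_fixes_adj hγ hu hw huw huy⟩
  exact Perm.ext fun v => (hfix v).1

variable (G ρ) in
def mapAut : Subgroup (Perm V) where
  carrier := {γ ∈ autSet G | rotAct γ ρ = ρ}
  one_mem' := ⟨fun _ _ => Iff.rfl, rotAct_one⟩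
  mul_mem' := by
    rintro a b ⟨ha, haρ⟩ ⟨hb, hbρ⟩
    exact ⟨fun u w => (ha _ _).trans (hb u w), by rw [rotAct_mul, hbρ, haρ]⟩
  inv_mem' := by
    rintro a ⟨ha, haρ⟩
    refine ⟨fun u w => ?_, ?_⟩
    · rw [← ha]
      simp
    · conv_lhs => rw [← haρ]
      rw [← rotAct_mul, inv_mul_cancel, rotAct_one]

instance : MulAction (mapAut G ρ) G.Dart where
  smul γ d := ⟨((γ : Perm V) d.fst, (γ : Perm V) d.snd), (γ.2.1 _ _).2 d.adj⟩
  one_smul _ := rfl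
  mul_smul _ _ _ := rfl

lemma mapAut_smul_toProd (γ : mapAut G ρ) (d : G.Dart) :
    (γ • d).toProd = ((γ : Perm V) d.fst, (γ : Perm V) d.snd) :=
  rfl

lemma IsRotationSystem.stabilizer_mapAut_eq_bot (hρ : IsRotationSystem G ρ) (hG : G.Connected)
    (d : G.Dart) : stabilizer (mapAut G ρ) d = ⊥ := by
  refine (Subgroup.eq_bot_iff_forall _).mpr fun γ hγ => Subtype.ext ?_
  have hfix : ((γ : Perm V) d.fst, (γ : Perm V) d.snd) = d.toProd :=
    (mapAut_smul_toProd γ d).symm.trans (congrArg SimpleGraph.Dart.toProd hγ)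
  exact hρ.eq_one_of_fixes_adj hG γ.2.2 d.adj (congrArg Prod.fst hfix) (congrArg Prod.snd hfix)

end MapAutomorphism

theorem map_automorphism_group_order_divides_general {V : Type*} [Fintype V]
    (G : SimpleGraph V) (hG : G.Connected) (e : ℕ) (he : G.edgeSet.ncard = e) (he1 : 1 ≤ e)
    (ρ : V → Equiv.Perm V) (hρ : IsRotationSystem G ρ) :
    (∀ γ ∈ {γ ∈ autSet G | rotAct γ ρ = ρ}, γ ≠ 1 →
        ∀ p : V × V, G.Adj p.1 p.2 → (γ p.1, γ p.2) ≠ p) ∧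
      ({γ ∈ autSet G | rotAct γ ρ = ρ}).ncard ∣ 2 * e ∧
      (({γ ∈ autSet G | rotAct γ ρ = ρ}).ncard = 2 * e →
        (∀ p q : V × V, G.Adj p.1 p.2 → G.Adj q.1 q.2 →
            ∃ γ ∈ {γ ∈ autSet G | rotAct γ ρ = ρ}, (γ p.1, γ p.2) = q) ∧
          (∀ u w : V, ∃ γ ∈ {γ ∈ autSet G | rotAct γ ρ = ρ}, γ u = w) ∧
          (∀ e₁ ∈ G.edgeSet, ∀ e₂ ∈ G.edgeSet,
            ∃ γ ∈ {γ ∈ autSet G | rotAct γ ρ = ρ}, Sym2.map (⇑γ) e₁ = e₂)) := by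
  have hcard : ({γ ∈ autSet G | rotAct γ ρ = ρ}).ncard = Nat.card (mapAut G ρ) :=
    (Nat.card_coe_set_eq _).symm
  have hdarts : Nat.card G.Dart = 2 * e := he ▸ G.natCard_dart
  have hfree := hρ.stabilizer_mapAut_eq_bot hG
  refine ⟨fun γ hγ hne p hp hfix => hne (hρ.eq_one_of_fixes_adj hG hγ.2 hp
      (congrArg Prod.fst hfix) (congrArg Prod.snd hfix)),
    hcard ▸ hdarts ▸ natCard_dvd_of_stabilizer_eq_bot hfree, fun h => ?_⟩
  have := isPretransitive_of_stabilizer_eq_bot_of_natCard_eq hfree (by rw [← hcard, h, hdarts])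
  have hdart (p q : V × V) (hp : G.Adj p.1 p.2) (hq : G.Adj q.1 q.2) :
      ∃ γ ∈ {γ ∈ autSet G | rotAct γ ρ = ρ}, (γ p.1, γ p.2) = q := by
    obtain ⟨γ, hγ⟩ := exists_smul_eq (mapAut G ρ) (⟨p, hp⟩ : G.Dart) ⟨q, hq⟩
    exact ⟨γ, γ.2, congrArg SimpleGraph.Dart.toProd hγ⟩
  have : Nontrivial V := by
    obtain ⟨⟨a, b⟩, hab⟩ := Set.nonempty_of_ncard_ne_zero (by omega : G.edgeSet.ncard ≠ 0)
    exact ⟨a, b, hab.ne⟩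
  refine ⟨hdart, fun u w => ?_, ?_⟩
  · obtain ⟨u', hu⟩ := hG.preconnected.exists_adj_of_nontrivial u
    obtain ⟨w', hw⟩ := hG.preconnected.exists_adj_of_nontrivial w
    obtain ⟨γ, hγ, hγuw⟩ := hdart (u, u') (w, w') hu hw
    exact ⟨γ, hγ, congrArg Prod.fst hγuw⟩
  · rintro ⟨a, b⟩ hab ⟨c, d⟩ hcd
    obtain ⟨γ, hγ, hγab⟩ := hdart (a, b) (c, d) hab hcd
    exact ⟨γ, hγ, by rw [Sym2.map_mk, ← hγab]⟩

/-- Theorem: the map-automorphism group `Γ_ρ(G)` of a connected graph with `e ≥ 1` edges acts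
freely on the `2e` darts (ordered pairs of adjacent vertices), hence its order divides `2e`;
moreover if its order equals `2e` then it acts transitively on darts, and hence transitively on
the vertices and on the edges. -/
theorem map_automorphism_group_order_divides {V : Type*} [Fintype V] [DecidableEq V]
    (G : SimpleGraph V) (hG : G.Connected) (e : ℕ) (he : G.edgeSet.ncard = e) (he1 : 1 ≤ e)
    (ρ : V → Equiv.Perm V) (hρ : IsRotationSystem G ρ) :
    (∀ γ ∈ {γ ∈ autSet G | rotAct γ ρ = ρ}, γ ≠ 1 →
        ∀ p : V × V, G.Adj p.1 p.2 → (γ p.1, γ p.2) ≠ p) ∧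
      ({γ ∈ autSet G | rotAct γ ρ = ρ}).ncard ∣ 2 * e ∧
      (({γ ∈ autSet G | rotAct γ ρ = ρ}).ncard = 2 * e →
        (∀ p q : V × V, G.Adj p.1 p.2 → G.Adj q.1 q.2 →
            ∃ γ ∈ {γ ∈ autSet G | rotAct γ ρ = ρ}, (γ p.1, γ p.2) = q) ∧
          (∀ u w : V, ∃ γ ∈ {γ ∈ autSet G | rotAct γ ρ = ρ}, γ u = w) ∧
          (∀ e₁ ∈ G.edgeSet, ∀ e₂ ∈ G.edgeSet,
            ∃ γ ∈ {γ ∈ autSet G | rotAct γ ρ = ρ}, Sym2.map (⇑γ) e₁ = e₂)) :=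
  map_automorphism_group_order_divides_general G hG e he he1 ρ hρ
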